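/- arXiv:0804.0453 — 3 statements merged into one kernel-verified Lean document; each statement's English description precedes it below -/
import Mathlib

section
/- Let N ∈ 𝒩 and α > 0. Then t ↦ N(t^α)/t is non-decreasing on (0,∞) if and only if t ↦ N^∧(t)^{1/α}/t is non-increasing on (0,∞). -/
/-!
The substitution `t = 1 / N(s^α)` is a decreasing bijection of `(0, ∞)` onto itself, and along it
`N^∧(t) = s^{-α}`, so `N^∧(t)^{1/α} / t = N(s^α) / s`. An order-reversing change of variables
turns a non-decreasing function into a non-increasing one and back.
-/

open MeasureTheory Filter Set Metric
open scoped ENNReal NNReal Topology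

noncomputable section

/-- The class 𝒩 of continuous increasing functions mapping ℝ₊ onto ℝ₊. -/
structure MemN (N : ℝ → ℝ) : Prop where
  contOn : ContinuousOn N (Ici 0)
  strictMonoOn : StrictMonoOn N (Ici 0)
  mapsTo : MapsTo N (Ici 0) (Ici 0)
  surjOn : SurjOn N (Ici 0) (Ici 0)

/-- A Young function: convex, increasing, vanishing at 0. -/
structure IsYoung (N : ℝ → ℝ) : Prop where
  convexOn : ConvexOn ℝ (Ici 0) N
  strictMonoOn : StrictMonoOn N (Ici 0)
  zero : N 0 = 0

/-- The (generalized) inverse `N⁻¹` of `N : ℝ₊ → ℝ₊`. -/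
def ninv (N : ℝ → ℝ) (y : ℝ) : ℝ := sInf {t : ℝ | 0 ≤ t ∧ y ≤ N t}

/-- The adjoint function `N^∧(t) = 1 / N⁻¹(1/t)`. -/
def nwedge (N : ℝ → ℝ) (t : ℝ) : ℝ := 1 / ninv N (1 / t)

variable {Ω : Type*}

/-- The class ℱ of functions which are Lipschitz on every ball. -/
def LipschitzOnBalls [PseudoMetricSpace Ω] (f : Ω → ℝ) : Prop :=
  ∀ (x : Ω) (r : ℝ), ∃ K : ℝ≥0, LipschitzOnWith K f (Metric.ball x r)

/-- The modulus of the gradient `|∇f|(x)` (equal to 0 at isolated points). -/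
def gradNorm [PseudoMetricSpace Ω] (f : Ω → ℝ) (x : Ω) : ℝ :=
  limsup (fun y => |f y - f x| / dist y x) (𝓝[≠] x)

/-- `‖ |∇f| ‖_{L_q(μ)}`. -/
def gradLqNorm [PseudoMetricSpace Ω] [MeasurableSpace Ω] (μ : Measure Ω) (q : ℝ≥0∞)
    (f : Ω → ℝ) : ℝ≥0∞ :=
  eLpNorm (gradNorm f) q μ

/-- The Orlicz (quasi-)norm `‖f‖_{N(μ)}`. -/
def orliczNorm [MeasurableSpace Ω] (μ : Measure Ω) (N : ℝ → ℝ) (f : Ω → ℝ) : ℝ :=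
  sInf {v : ℝ | 0 < v ∧ ∫⁻ x, ENNReal.ofReal (N (|f x| / v)) ∂μ ≤ 1}

/-- The dual norm `‖f‖_{N(μ)*}`. -/
def dualOrliczNorm [MeasurableSpace Ω] (μ : Measure Ω) (N : ℝ → ℝ) (f : Ω → ℝ) : ℝ :=
  sSup {r : ℝ | ∃ g : Ω → ℝ, orliczNorm μ N g ≤ 1 ∧ r = ∫ x, f x * g x ∂μ}

/-- The weak Orlicz quasi-norm `‖f‖_{N(μ),∞} = sup_{t>0} N^∧(μ{|f|≥t})·t`. -/
def weakOrliczNorm [MeasurableSpace Ω] (μ : Measure Ω) (N : ℝ → ℝ) (f : Ω → ℝ) : ℝ :=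
  sSup {r : ℝ | ∃ t : ℝ, 0 < t ∧ r = nwedge N ((μ {x | t ≤ |f x|}).toReal) * t}

/-- `m` is a median of `f` under `μ`. -/
def IsMedian [MeasurableSpace Ω] (μ : Measure Ω) (f : Ω → ℝ) (m : ℝ) : Prop :=
  (1 / 2 : ℝ≥0∞) ≤ μ {x | m ≤ f x} ∧ (1 / 2 : ℝ≥0∞) ≤ μ {x | f x ≤ m}

/-- Minkowski's exterior boundary measure `μ⁺(A)`. -/
def boundaryMeasure [PseudoMetricSpace Ω] [MeasurableSpace Ω] (μ : Measure Ω) (A : Set Ω) :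
    ℝ≥0∞ :=
  liminf (fun ε : ℝ => (μ (Metric.thickening ε A) - μ A) / ENNReal.ofReal ε) (𝓝[>] (0 : ℝ))

/-- The isoperimetric profile `I(t)`: the maximal function with `μ⁺(A) ≥ I(μ(A))`. -/
def isoProfile [PseudoMetricSpace Ω] [MeasurableSpace Ω] (μ : Measure Ω) (t : ℝ) : ℝ≥0∞ :=
  ⨅ (A : Set Ω) (_ : MeasurableSet A) (_ : μ A = ENNReal.ofReal t), boundaryMeasure μ A

/-- `Ĩ(t) = min(I(t), I(1-t))`. -/
def tildeIsoProfile [PseudoMetricSpace Ω] [MeasurableSpace Ω] (μ : Measure Ω) (t : ℝ) : ℝ≥0∞ :=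
  min (isoProfile μ t) (isoProfile μ (1 - t))

/-- The `q`-capacity `Cap_q(a,b)`. -/
def capacity [PseudoMetricSpace Ω] [MeasurableSpace Ω] (μ : Measure Ω) (q a b : ℝ) : ℝ≥0∞ :=
  ⨅ (Φ : Ω → ℝ) (_ : LipschitzOnBalls Φ) (_ : ∀ x, Φ x ∈ Icc (0 : ℝ) 1)
    (_ : ENNReal.ofReal a ≤ μ {x | Φ x = 1}) (_ : ENNReal.ofReal (1 - b) ≤ μ {x | Φ x = 0}),
    gradLqNorm μ (ENNReal.ofReal q) Φ

/-- A log-concave function (of the form exp(-ψ) with ψ convex, ℝ ∪ {+∞} valued). -/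
def IsLogConcaveFn {E : Type*} [AddCommGroup E] [Module ℝ E] (f : E → ℝ) : Prop :=
  (∀ x, 0 ≤ f x) ∧
    ∀ x y : E, ∀ a b : ℝ, 0 ≤ a → 0 ≤ b → a + b = 1 → f x ^ a * f y ^ b ≤ f (a • x + b • y)

/-- An absolutely continuous log-concave measure on Euclidean space. -/
def IsLogConcaveMeasure {n : ℕ} (μ : Measure (EuclideanSpace ℝ (Fin n))) : Prop :=
  ∃ f : EuclideanSpace ℝ (Fin n) → ℝ, IsLogConcaveFn f ∧
    μ = volume.withDensity fun x => ENNReal.ofReal (f x)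

theorem StrictAntiOn.monotoneOn_comp_iff_antitoneOn {α β γ : Type*} [LinearOrder α]
    [Preorder β] [Preorder γ] {h : α → β} {g : β → γ} {s : Set α} {t : Set β}
    (hh : StrictAntiOn h s) (hmaps : MapsTo h s t) (hsurj : SurjOn h s t) :
    MonotoneOn (g ∘ h) s ↔ AntitoneOn g t := by
  constructor
  · intro hg a ha b hb hab
    obtain ⟨x, hx, rfl⟩ := hsurj ha
    obtain ⟨y, hy, rfl⟩ := hsurj hb
    exact hg hy hx ((hh.le_iff_ge hx hy).mp hab)
  · intro hg x hx y hy hxy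
    exact hg (hmaps hy) (hmaps hx) (hh.antitoneOn hx hy hxy)

theorem ninv_apply_self {N : ℝ → ℝ} (hN : StrictMonoOn N (Ici 0)) {v : ℝ} (hv : 0 ≤ v) :
    ninv N (N v) = v := by
  have hset : {t : ℝ | 0 ≤ t ∧ N v ≤ N t} = Ici v := by
    ext t
    constructor
    · rintro ⟨ht, hvt⟩
      exact (hN.le_iff_le hv ht).mp hvt
    · intro hvt
      exact ⟨hv.trans hvt, hN.monotoneOn hv (hv.trans hvt) hvt⟩
  rw [ninv, hset, csInf_Ici]

theorem nwedge_one_div_apply {N : ℝ → ℝ} (hN : StrictMonoOn N (Ici 0)) {v : ℝ} (hv : 0 ≤ v) :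
    nwedge N (1 / N v) = 1 / v := by
  rw [nwedge, one_div_one_div, ninv_apply_self hN hv]

namespace MemN

variable {N : ℝ → ℝ}

theorem map_zero (hN : MemN N) : N 0 = 0 := by
  obtain ⟨w, hw, hNw⟩ := hN.surjOn (self_mem_Ici : (0 : ℝ) ∈ Ici 0)
  exact le_antisymm (hNw ▸ hN.strictMonoOn.monotoneOn self_mem_Ici hw hw) (hN.mapsTo self_mem_Ici)

theorem pos_of_pos (hN : MemN N) {x : ℝ} (hx : 0 < x) : 0 < N x :=
  hN.map_zero ▸ hN.strictMonoOn self_mem_Ici hx.le hx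

theorem strictAntiOn_one_div_comp_rpow (hN : MemN N) {α : ℝ} (hα : 0 < α) :
    StrictAntiOn (fun s => 1 / N (s ^ α)) (Ioi 0) := fun _ hx _ hy hxy =>
  one_div_lt_one_div_of_lt (hN.pos_of_pos (Real.rpow_pos_of_pos hx α))
    (hN.strictMonoOn (Real.rpow_nonneg hx.le α) (Real.rpow_nonneg hy.le α)
      (Real.rpow_lt_rpow hx.le hxy hα))

theorem mapsTo_one_div_comp_rpow (hN : MemN N) (α : ℝ) :
    MapsTo (fun s => 1 / N (s ^ α)) (Ioi 0) (Ioi 0) :=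
  fun _ hs => one_div_pos.mpr (hN.pos_of_pos (Real.rpow_pos_of_pos hs α))

theorem surjOn_one_div_comp_rpow (hN : MemN N) {α : ℝ} (hα : 0 < α) :
    SurjOn (fun s => 1 / N (s ^ α)) (Ioi 0) (Ioi 0) := by
  intro t ht
  have ht' : 0 < 1 / t := one_div_pos.mpr ht
  obtain ⟨u, hu, hNu⟩ := hN.surjOn ht'.le
  have hu_pos : 0 < u := lt_of_le_of_ne hu fun h => by
    rw [← h, hN.map_zero] at hNu
    exact ht'.ne hNu
  refine ⟨u ^ α⁻¹, Real.rpow_pos_of_pos hu_pos _, ?_⟩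
  simp only [Real.rpow_inv_rpow hu_pos.le hα.ne', hNu, one_div_one_div]

end MemN

/-- For `N ∈ 𝒩` and `α > 0`: `t ↦ N(t^α)/t` is non-decreasing on `(0,∞)`
iff `t ↦ N^∧(t)^{1/α}/t` is non-increasing on `(0,∞)`. -/
theorem nwedge_monotonicity_duality (N : ℝ → ℝ) (hN : MemN N) (α : ℝ) (hα : 0 < α) :
    MonotoneOn (fun t => N (t ^ α) / t) (Ioi (0 : ℝ)) ↔
      AntitoneOn (fun t => nwedge N t ^ (1 / α) / t) (Ioi (0 : ℝ)) := by
  have hcomp : EqOn ((fun t => nwedge N t ^ (1 / α) / t) ∘ fun s => 1 / N (s ^ α))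
      (fun t => N (t ^ α) / t) (Ioi 0) := by
    intro s hs
    have hs : 0 < s := hs
    have hpow : (1 / s ^ α) ^ (1 / α) = 1 / s := by
      rw [Real.div_rpow zero_le_one (Real.rpow_nonneg hs.le α), Real.one_rpow, one_div α,
        Real.rpow_rpow_inv hs.le hα.ne']
    simp only [Function.comp_apply,
      nwedge_one_div_apply hN.strictMonoOn (Real.rpow_nonneg hs.le α), hpow]
    field_simp
  rw [← (hN.strictAntiOn_one_div_comp_rpow hα).monotoneOn_comp_iff_antitoneOn
    (hN.mapsTo_one_div_comp_rpow α) (hN.surjOn_one_div_comp_rpow hα)]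
  exact ⟨fun h => h.congr hcomp.symm, fun h => h.congr hcomp⟩

end
end

section
/- Let (Ω,d,μ) be a metric probability space, N ∈ 𝒩, 1 ≤ q < ∞ and D > 0. If the weak-type Orlicz-Sobolev inequality D·‖f − M_μ f‖_{N(μ),∞} ≤ ‖|∇f|‖_{L_q(μ)} holds for all f ∈ ℱ (for every median M_μ f of f), then Cap_q(t,1/2) ≥ D·N^∧(t) for all t ∈ [0,1/2]. -/
open MeasureTheory Filter Set Metric
open scoped ENNReal NNReal Topology

noncomputable section

variable {Ω : Type*}

/-!
An admissible `Φ` for `Cap_q(t, 1/2)` takes values in `[0, 1]` and vanishes on half of the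
space, so `0` is a median of `Φ`. The weak-type inequality applied to `Φ` then bounds
`‖|∇Φ|‖_q` below by `D ‖Φ‖_{N(μ),∞}`, and the level `1` of the weak norm, where
`μ{Φ ≥ 1} ≥ t`, gives `‖Φ‖_{N(μ),∞} ≥ N^∧(t)` by monotonicity of `N^∧`.
-/

lemma MemN.zero {N : ℝ → ℝ} (hN : MemN N) : N 0 = 0 := by
  obtain ⟨t, ht, hNt⟩ := hN.surjOn (self_mem_Ici : (0 : ℝ) ∈ Ici 0)
  rcases (mem_Ici.1 ht).eq_or_lt with rfl | htpos
  · exact hNt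
  · have h0_nonneg : 0 ≤ N 0 := hN.mapsTo self_mem_Ici
    linarith [hN.strictMonoOn self_mem_Ici ht htpos]

lemma ninv_nonneg (N : ℝ → ℝ) (y : ℝ) : 0 ≤ ninv N y :=
  Real.sInf_nonneg fun _ hx => hx.1

lemma ninv_set_nonempty {N : ℝ → ℝ} (hN : MemN N) {y : ℝ} (hy : 0 ≤ y) :
    {t : ℝ | 0 ≤ t ∧ y ≤ N t}.Nonempty := by
  obtain ⟨t, ht, hNt⟩ := hN.surjOn (mem_Ici.2 hy)
  exact ⟨t, mem_Ici.1 ht, hNt.ge⟩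

/- A preimage `c` of `y / 2` bounds the defining set from below, and `c ≠ 0` since `N 0 = 0`. -/
lemma ninv_pos {N : ℝ → ℝ} (hN : MemN N) {y : ℝ} (hy : 0 < y) : 0 < ninv N y := by
  obtain ⟨c, hc, hNc⟩ := hN.surjOn (mem_Ici.2 (half_pos hy).le)
  have hc_pos : 0 < c := by
    refine (mem_Ici.1 hc).lt_of_ne fun hc0 => ?_
    rw [← hc0, hN.zero] at hNc
    linarith
  refine hc_pos.trans_le (le_csInf (ninv_set_nonempty hN hy.le) fun b hb => ?_)
  by_contra! hbc
  linarith [hN.strictMonoOn (mem_Ici.2 hb.1) hc hbc, hb.2]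

lemma ninv_mono {N : ℝ → ℝ} (hN : MemN N) {y₁ y₂ : ℝ} (h2 : 0 ≤ y₂) (h12 : y₁ ≤ y₂) :
    ninv N y₁ ≤ ninv N y₂ :=
  csInf_le_csInf ⟨0, fun _ hx => hx.1⟩ (ninv_set_nonempty hN h2)
    fun _ hx => ⟨hx.1, h12.trans hx.2⟩

lemma nwedge_nonneg (N : ℝ → ℝ) (t : ℝ) : 0 ≤ nwedge N t :=
  one_div_nonneg.2 (ninv_nonneg N _)

/- `1 / 0 = 0` in Lean, so `N^∧(0) = 1 / N⁻¹(0) = 1 / 0`. -/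
lemma nwedge_zero {N : ℝ → ℝ} (hN : MemN N) : nwedge N 0 = 0 := by
  have : ninv N (1 / 0) = 0 := by
    rw [one_div, inv_zero]
    exact le_antisymm (csInf_le ⟨0, fun _ hx => hx.1⟩ ⟨le_rfl, hN.zero.ge⟩) (ninv_nonneg N 0)
  rw [nwedge, this, div_zero]

lemma nwedge_monotoneOn {N : ℝ → ℝ} (hN : MemN N) : MonotoneOn (nwedge N) (Ici 0) := by
  intro s hs t _ hst
  rcases (mem_Ici.1 hs).eq_or_lt with rfl | hs_pos
  · rw [nwedge_zero hN]
    exact nwedge_nonneg N t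
  · have ht_pos : 0 < t := hs_pos.trans_le hst
    exact one_div_le_one_div_of_le (ninv_pos hN (by positivity))
      (ninv_mono hN (by positivity) (one_div_le_one_div_of_le hs_pos hst))

section Probability

variable {Ω : Type*} [MeasurableSpace Ω] {μ : Measure Ω} [IsProbabilityMeasure μ]

lemma nwedge_measure_le_one {N : ℝ → ℝ} (hN : MemN N) (s : Set Ω) :
    nwedge N (μ s).toReal ≤ nwedge N 1 :=
  nwedge_monotoneOn hN (mem_Ici.2 ENNReal.toReal_nonneg) (mem_Ici.2 zero_le_one)
    (ENNReal.toReal_le_of_le_ofReal zero_le_one (by simp [prob_le_one]))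

/- Levels above the bound `C` see an empty set, where `N^∧` vanishes. -/
lemma bddAbove_weakOrlicz_of_abs_le {N : ℝ → ℝ} (hN : MemN N) {f : Ω → ℝ} {C : ℝ}
    (hf : ∀ x, |f x| ≤ C) :
    BddAbove {r : ℝ | ∃ t : ℝ, 0 < t ∧ r = nwedge N ((μ {x | t ≤ |f x|}).toReal) * t} := by
  refine ⟨nwedge N 1 * C, ?_⟩
  rintro _ ⟨t, ht, rfl⟩
  rcases le_or_gt t C with htC | hCt
  · exact mul_le_mul (nwedge_measure_le_one hN _) htC ht.le (nwedge_nonneg N 1)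
  · have hempty : {x | t ≤ |f x|} = ∅ :=
      eq_empty_of_forall_notMem fun x hx => (hf x).not_gt (hCt.trans_le hx)
    rw [hempty, measure_empty, ENNReal.toReal_zero, nwedge_zero hN, zero_mul]
    have : Nonempty Ω := nonempty_of_isProbabilityMeasure μ
    exact mul_nonneg (nwedge_nonneg N 1) ((abs_nonneg _).trans (hf (Classical.arbitrary Ω)))

lemma le_weakOrliczNorm_of_abs_le {N : ℝ → ℝ} (hN : MemN N) {f : Ω → ℝ} {C : ℝ}
    (hf : ∀ x, |f x| ≤ C) {t : ℝ} (ht : 0 < t) :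
    nwedge N ((μ {x | t ≤ |f x|}).toReal) * t ≤ weakOrliczNorm μ N f :=
  le_csSup (bddAbove_weakOrlicz_of_abs_le hN hf) ⟨t, ht, rfl⟩

lemma isMedian_zero_of_nonneg {f : Ω → ℝ} (hf : ∀ x, 0 ≤ f x)
    (h : (1 / 2 : ℝ≥0∞) ≤ μ {x | f x = 0}) : IsMedian μ f 0 := by
  refine ⟨?_, h.trans (measure_mono fun x hx => le_of_eq hx)⟩
  rw [show {x | 0 ≤ f x} = univ from eq_univ_of_forall hf, measure_univ]
  exact ENNReal.half_le_self

/- Take the level `1` in the supremum defining the weak norm. -/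
lemma nwedge_le_weakOrliczNorm_of_unitInterval {N : ℝ → ℝ} (hN : MemN N) {Φ : Ω → ℝ}
    (hΦ : ∀ x, Φ x ∈ Icc (0 : ℝ) 1) {t : ℝ} (ht : 0 ≤ t)
    (h1 : ENNReal.ofReal t ≤ μ {x | Φ x = 1}) :
    nwedge N t ≤ weakOrliczNorm μ N Φ := by
  have habs : ∀ x, |Φ x| ≤ 1 := fun x => abs_le.2 ⟨by linarith [(hΦ x).1], (hΦ x).2⟩
  have hsub : {x | Φ x = 1} ⊆ {x | 1 ≤ |Φ x|} := fun x hx => by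
    simp [show Φ x = 1 from hx]
  have hts : t ≤ (μ {x | 1 ≤ |Φ x|}).toReal :=
    (ENNReal.ofReal_le_iff_le_toReal (measure_ne_top μ _)).1 (h1.trans (measure_mono hsub))
  calc nwedge N t ≤ nwedge N (μ {x | 1 ≤ |Φ x|}).toReal * 1 := by
        rw [mul_one]
        exact nwedge_monotoneOn hN (mem_Ici.2 ht) (mem_Ici.2 (ht.trans hts)) hts
    _ ≤ weakOrliczNorm μ N Φ := le_weakOrliczNorm_of_abs_le hN habs one_pos

end Probability

theorem weak_orlicz_sobolev_implies_cap_general {Ω : Type*} [MetricSpace Ω]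
    [MeasurableSpace Ω]
    (μ : Measure Ω) [IsProbabilityMeasure μ]
    (N : ℝ → ℝ) (hN : MemN N) (q : ℝ) (D : ℝ) (hD : 0 < D)
    (h : ∀ f : Ω → ℝ, LipschitzOnBalls f → ∀ m : ℝ, IsMedian μ f m →
      ENNReal.ofReal (D * weakOrliczNorm μ N fun x => f x - m) ≤
        gradLqNorm μ (ENNReal.ofReal q) f) :
    ∀ t ∈ Icc (0 : ℝ) (1 / 2), ENNReal.ofReal (D * nwedge N t) ≤ capacity μ q t (1 / 2) := by
  intro t ht
  refine le_iInf fun Φ => le_iInf fun hLip => le_iInf fun hΦ => le_iInf fun h1 =>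
    le_iInf fun h0 => ?_
  have h0' : (1 / 2 : ℝ≥0∞) ≤ μ {x | Φ x = 0} := by
    convert h0 using 1
    rw [show (1 : ℝ) - 1 / 2 = 2⁻¹ by norm_num, ENNReal.ofReal_inv_of_pos two_pos, one_div,
      ENNReal.ofReal_ofNat]
  have hmed : IsMedian μ Φ 0 := isMedian_zero_of_nonneg (fun x => (hΦ x).1) h0'
  calc ENNReal.ofReal (D * nwedge N t)
      ≤ ENNReal.ofReal (D * weakOrliczNorm μ N fun x => Φ x - 0) := by
        simp only [sub_zero]
        gcongr
        exact nwedge_le_weakOrliczNorm_of_unitInterval hN hΦ ht.1 h1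
    _ ≤ gradLqNorm μ (ENNReal.ofReal q) Φ := h Φ hLip 0 hmed

/-- A weak-type Orlicz–Sobolev inequality
`D·‖f − M_μ f‖_{N(μ),∞} ≤ ‖|∇f|‖_{L_q(μ)}` implies `Cap_q(t,1/2) ≥ D·N^∧(t)` on `[0,1/2]`. -/
theorem weak_orlicz_sobolev_implies_cap {Ω : Type*} [MetricSpace Ω]
    [TopologicalSpace.SeparableSpace Ω] [MeasurableSpace Ω] [BorelSpace Ω]
    (μ : Measure Ω) [IsProbabilityMeasure μ] (hnd : ∀ x : Ω, μ {x} ≠ 1)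
    (N : ℝ → ℝ) (hN : MemN N) (q : ℝ) (hq : 1 ≤ q) (D : ℝ) (hD : 0 < D)
    (h : ∀ f : Ω → ℝ, LipschitzOnBalls f → ∀ m : ℝ, IsMedian μ f m →
      ENNReal.ofReal (D * weakOrliczNorm μ N fun x => f x - m) ≤
        gradLqNorm μ (ENNReal.ofReal q) f) :
    ∀ t ∈ Icc (0 : ℝ) (1 / 2), ENNReal.ofReal (D * nwedge N t) ≤ capacity μ q t (1 / 2) :=
  weak_orlicz_sobolev_implies_cap_general μ N hN q D hD h
end
end

section
/- Let (Ω,d,μ) be a metric probability space, 1 ≤ q < ∞, and let N ∈ 𝒩 be such that t ↦ N(t)^{1/q}/t is non-decreasing on (0,∞). Define N₀(t) := 2·(t/N^{−1}(2))^q for t ∈ [0, N^{−1}(2)] and N₀(t) := N(t) for t ≥ N^{−1}(2). Then the following are equivalent: (1) D₁·‖f − M_μ f‖_{N(μ)} ≤ ‖|∇f|‖_{L_q(μ)} for all f ∈ ℱ; (2) D₂·‖f − M_μ f‖_{N₀(μ)} ≤ ‖|∇f|‖_{L_q(μ)} for all f ∈ ℱ; and the best constants satisfy D₁/4 ≤ D₂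 ≤ 4 D₁. -/
open MeasureTheory Filter Set Metric
open scoped ENNReal NNReal Topology

noncomputable section

variable {Ω : Type*}

/-- The modification `N₀` of `N`, replaced below `N⁻¹(2)` by the homogeneous `q`-power. -/
def modifiedYoung (N : ℝ → ℝ) (q : ℝ) : ℝ → ℝ := fun t =>
  if t ≤ ninv N 2 then 2 * (t / ninv N 2) ^ q else N t

/-! Write `a = N⁻¹(2)`. Monotonicity of `N(t)^{1/q}/t` says `N(s) ≤ (s/t)^q N(t)` for `s ≤ t`;
comparing with `N(a) = 2` gives `N ≤ N₀` and `N₀(s/4) ≤ 1/2 + N(s)/2`. As `μ` is a probability,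
the second bound turns `∫ N(|g|/v) dμ ≤ 1` into `∫ N₀(|g|/(4v)) dμ ≤ 1`, so
`‖g‖_{N(μ)} ≤ ‖g‖_{N₀(μ)} ≤ 4 ‖g‖_{N(μ)}` for every `g`, and the Sobolev inequalities for `N` and
`N₀` transfer to each other at the cost of a factor `4`. -/

def orliczAdmissible [MeasurableSpace Ω] (μ : Measure Ω) (N : ℝ → ℝ) (g : Ω → ℝ) : Set ℝ :=
  {v : ℝ | 0 < v ∧ ∫⁻ x, ENNReal.ofReal (N (|g x| / v)) ∂μ ≤ 1}

section OrliczNorm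

variable [MeasurableSpace Ω] {μ : Measure Ω} {N M : ℝ → ℝ} {g : Ω → ℝ} {c : ℝ}

theorem orliczNorm_eq_sInf_orliczAdmissible :
    orliczNorm μ N g = sInf (orliczAdmissible μ N g) := rfl

theorem bddBelow_orliczAdmissible : BddBelow (orliczAdmissible μ N g) :=
  ⟨0, fun _ hv => hv.1.le⟩

theorem orliczNorm_nonneg : 0 ≤ orliczNorm μ N g :=
  Real.sInf_nonneg fun _ hv => hv.1.le

theorem orliczAdmissible_subset_of_le (hNM : ∀ t, 0 ≤ t → N t ≤ M t) :
    orliczAdmissible μ M g ⊆ orliczAdmissible μ N g := fun _ ⟨hv, hint⟩ =>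
  ⟨hv, (lintegral_mono fun _ =>
    ENNReal.ofReal_le_ofReal (hNM _ (div_nonneg (abs_nonneg _) hv.le))).trans hint⟩

theorem mul_mem_orliczAdmissible [IsProbabilityMeasure μ] (hc : 0 < c)
    (hMN : ∀ t, 0 ≤ t → M (t / c) ≤ 1 / 2 + N t / 2) {u : ℝ}
    (hu : u ∈ orliczAdmissible μ N g) : c * u ∈ orliczAdmissible μ M g := by
  obtain ⟨hu, hint⟩ := hu
  have hpoint : ∀ x, ENNReal.ofReal (M (|g x| / (c * u))) ≤
      ENNReal.ofReal (1 / 2) + ENNReal.ofReal (1 / 2) * ENNReal.ofReal (N (|g x| / u)) := by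
    intro x
    calc ENNReal.ofReal (M (|g x| / (c * u)))
        ≤ ENNReal.ofReal (1 / 2 + N (|g x| / u) / 2) := by
          rw [mul_comm, ← div_div]
          exact ENNReal.ofReal_le_ofReal (hMN _ (div_nonneg (abs_nonneg _) hu.le))
      _ ≤ ENNReal.ofReal (1 / 2) + ENNReal.ofReal (N (|g x| / u) / 2) := ENNReal.ofReal_add_le
      _ = _ := by rw [← ENNReal.ofReal_mul (by norm_num), one_div_mul_eq_div]
  refine ⟨mul_pos hc hu, ?_⟩
  calc ∫⁻ x, ENNReal.ofReal (M (|g x| / (c * u))) ∂μ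
      ≤ ∫⁻ x, (ENNReal.ofReal (1 / 2) +
          ENNReal.ofReal (1 / 2) * ENNReal.ofReal (N (|g x| / u))) ∂μ := lintegral_mono hpoint
    _ = ENNReal.ofReal (1 / 2) +
          ENNReal.ofReal (1 / 2) * ∫⁻ x, ENNReal.ofReal (N (|g x| / u)) ∂μ := by
        rw [lintegral_add_left measurable_const, lintegral_const, measure_univ, mul_one,
          lintegral_const_mul' _ _ ENNReal.ofReal_ne_top]
    _ ≤ ENNReal.ofReal (1 / 2) + ENNReal.ofReal (1 / 2) * 1 := by gcongr
    _ = 1 := by rw [mul_one, ← ENNReal.ofReal_add (by norm_num) (by norm_num)]; norm_num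

theorem orliczNorm_le_of_mul_mem (hsub : orliczAdmissible μ M g ⊆ orliczAdmissible μ N g)
    (hmul : ∀ u ∈ orliczAdmissible μ N g, c * u ∈ orliczAdmissible μ M g) :
    orliczNorm μ N g ≤ orliczNorm μ M g := by
  rcases (orliczAdmissible μ M g).eq_empty_or_nonempty with hM | hM
  · have hN : orliczAdmissible μ N g = ∅ :=
      eq_empty_of_forall_notMem fun u hu => hM.subset (hmul u hu)
    simp only [orliczNorm_eq_sInf_orliczAdmissible, hM, hN, le_refl]
  · exact csInf_le_csInf bddBelow_orliczAdmissible hM hsub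

theorem orliczNorm_le_mul_of_mul_mem (hc : 0 ≤ c)
    (hsub : orliczAdmissible μ M g ⊆ orliczAdmissible μ N g)
    (hmul : ∀ u ∈ orliczAdmissible μ N g, c * u ∈ orliczAdmissible μ M g) :
    orliczNorm μ M g ≤ c * orliczNorm μ N g := by
  rw [orliczNorm_eq_sInf_orliczAdmissible, orliczNorm_eq_sInf_orliczAdmissible,
    ← smul_eq_mul, ← Real.sInf_smul_of_nonneg hc]
  rcases (orliczAdmissible μ N g).eq_empty_or_nonempty with hN | hN
  · simp only [hN, smul_set_empty, Real.sInf_empty, subset_empty_iff.1 (hN ▸ hsub), le_refl]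
  · refine csInf_le_csInf bddBelow_orliczAdmissible hN.smul_set ?_
    rintro _ ⟨u, hu, rfl⟩
    exact hmul u hu

end OrliczNorm

namespace MemN

variable {N : ℝ → ℝ}

theorem nonneg (hN : MemN N) {t : ℝ} (ht : 0 ≤ t) : 0 ≤ N t := hN.mapsTo ht

theorem ninv_apply (hN : MemN N) {t : ℝ} (ht : 0 ≤ t) : ninv N (N t) = t :=
  IsLeast.csInf_eq ⟨⟨ht, le_rfl⟩, fun _ ⟨hs, hNs⟩ => (hN.strictMonoOn.le_iff_le ht hs).1 hNs⟩

theorem apply_ninv (hN : MemN N) {y : ℝ} (hy : 0 ≤ y) : N (ninv N y) = y := by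
  obtain ⟨t, ht, rfl⟩ := hN.surjOn hy
  rw [hN.ninv_apply ht]

theorem ninv_pos (hN : MemN N) {y : ℝ} (hy : 0 < y) : 0 < ninv N y := by
  obtain ⟨t, ht, rfl⟩ := hN.surjOn hy.le
  rw [hN.ninv_apply ht]
  refine ht.lt_of_ne ?_
  rintro rfl
  exact hy.ne' hN.map_zero

theorem apply_le_div_rpow_mul (hN : MemN N) {q : ℝ} (hq : 0 < q)
    (hNq : MonotoneOn (fun t => N t ^ (1 / q) / t) (Ioi (0 : ℝ)))
    {s t : ℝ} (hs : 0 < s) (hst : s ≤ t) : N s ≤ (s / t) ^ q * N t := by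
  have ht : 0 < t := hs.trans_le hst
  have hNt := hN.nonneg ht.le
  have hroot : N s ^ q⁻¹ ≤ s / t * N t ^ q⁻¹ := by
    have h := hNq hs ht hst
    simp only [one_div] at h
    rw [div_le_div_iff₀ hs ht] at h
    rw [div_mul_eq_mul_div, le_div_iff₀ ht]
    linarith
  rw [Real.rpow_inv_le_iff_of_pos (hN.nonneg hs.le) (by positivity) hq,
    Real.mul_rpow (by positivity) (by positivity), Real.rpow_inv_rpow hNt hq.ne'] at hroot
  exact hroot

variable {q : ℝ} (hN : MemN N) (hNq : MonotoneOn (fun t => N t ^ (1 / q) / t) (Ioi (0 : ℝ)))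
include hN hNq

theorem apply_le_two_mul_rpow (hq : 0 < q) {s : ℝ} (hs : 0 ≤ s) (has : s ≤ ninv N 2) :
    N s ≤ 2 * (s / ninv N 2) ^ q := by
  rcases hs.eq_or_lt with rfl | hs
  · rw [hN.map_zero, zero_div, Real.zero_rpow hq.ne', mul_zero]
  · have h := hN.apply_le_div_rpow_mul hq hNq hs has
    rwa [hN.apply_ninv zero_le_two, mul_comm] at h

theorem two_mul_rpow_le_apply (hq : 0 < q) {s : ℝ} (has : ninv N 2 ≤ s) :
    2 * (s / ninv N 2) ^ q ≤ N s := by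
  have ha := hN.ninv_pos two_pos
  have h := hN.apply_le_div_rpow_mul hq hNq ha has
  rw [hN.apply_ninv zero_le_two] at h
  have hs : 0 < s := ha.trans_le has
  have hprod : (s / ninv N 2) ^ q * (ninv N 2 / s) ^ q = 1 := by
    rw [← Real.mul_rpow (by positivity) (by positivity),
      show s / ninv N 2 * (ninv N 2 / s) = 1 by field_simp, Real.one_rpow]
  calc 2 * (s / ninv N 2) ^ q ≤ (ninv N 2 / s) ^ q * N s * (s / ninv N 2) ^ q := by gcongr
    _ = N s * ((s / ninv N 2) ^ q * (ninv N 2 / s) ^ q) := by ring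
    _ = N s := by rw [hprod, mul_one]

theorem le_modifiedYoung (hq : 0 < q) {s : ℝ} (hs : 0 ≤ s) : N s ≤ modifiedYoung N q s := by
  unfold modifiedYoung
  split_ifs with has
  · exact hN.apply_le_two_mul_rpow hNq hq hs has
  · exact le_rfl

theorem modifiedYoung_div_four_le (hq : 1 ≤ q) {s : ℝ} (hs : 0 ≤ s) :
    modifiedYoung N q (s / 4) ≤ 1 / 2 + N s / 2 := by
  have hq0 : 0 < q := zero_lt_one.trans_le hq
  have hquarter : (4⁻¹ : ℝ) ^ q ≤ 4⁻¹ := by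
    simpa using Real.rpow_le_rpow_of_exponent_ge (by norm_num : (0 : ℝ) < 4⁻¹) (by norm_num) hq
  have hNs := hN.nonneg hs
  have ha := hN.ninv_pos two_pos
  unfold modifiedYoung
  split_ifs with has
  · have hsplit : 2 * (s / 4 / ninv N 2) ^ q = 4⁻¹ ^ q * (2 * (s / ninv N 2) ^ q) := by
      rw [show s / 4 / ninv N 2 = 4⁻¹ * (s / ninv N 2) by ring,
        Real.mul_rpow (by norm_num) (by positivity)]
      ring
    have hbound : 2 * (s / ninv N 2) ^ q ≤ 2 + N s := by
      rcases le_total s (ninv N 2) with h | h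
      · have : (s / ninv N 2) ^ q ≤ 1 :=
          Real.rpow_le_one (by positivity) ((div_le_one ha).2 h) hq0.le
        linarith
      · linarith [hN.two_mul_rpow_le_apply hNq hq0 h]
    rw [hsplit]
    nlinarith [Real.rpow_nonneg (by norm_num : (0 : ℝ) ≤ 4⁻¹) q]
  · have h := hN.apply_le_div_rpow_mul hq0 hNq (ha.trans (not_le.1 has))
      (by linarith : s / 4 ≤ s)
    rw [div_div_cancel_left' (by linarith [not_le.1 has] : s ≠ 0)] at h
    nlinarith

theorem orliczNorm_le_orliczNorm_modifiedYoung (hq : 1 ≤ q) [MeasurableSpace Ω]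
    (μ : Measure Ω) [IsProbabilityMeasure μ] (g : Ω → ℝ) :
    orliczNorm μ N g ≤ orliczNorm μ (modifiedYoung N q) g :=
  orliczNorm_le_of_mul_mem (c := 4)
    (orliczAdmissible_subset_of_le fun _ => hN.le_modifiedYoung hNq (by linarith))
    fun _ => mul_mem_orliczAdmissible four_pos fun _ => hN.modifiedYoung_div_four_le hNq hq

theorem orliczNorm_modifiedYoung_le (hq : 1 ≤ q) [MeasurableSpace Ω]
    (μ : Measure Ω) [IsProbabilityMeasure μ] (g : Ω → ℝ) :
    orliczNorm μ (modifiedYoung N q) g ≤ 4 * orliczNorm μ N g :=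
  orliczNorm_le_mul_of_mul_mem zero_le_four
    (orliczAdmissible_subset_of_le fun _ => hN.le_modifiedYoung hNq (by linarith))
    fun _ => mul_mem_orliczAdmissible four_pos fun _ => hN.modifiedYoung_div_four_le hNq hq

end MemN

theorem orlicz_sobolev_modification_at_zero_general {Ω : Type*} [MetricSpace Ω] [MeasurableSpace Ω]
    (μ : Measure Ω) [IsProbabilityMeasure μ]
    (N : ℝ → ℝ) (hN : MemN N) (q : ℝ) (hq : 1 ≤ q)
    (hNq : MonotoneOn (fun t => N t ^ (1 / q) / t) (Ioi (0 : ℝ))) :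
    (∀ D₁ : ℝ, 0 < D₁ →
      (∀ f : Ω → ℝ, LipschitzOnBalls f → ∀ m : ℝ, IsMedian μ f m →
        ENNReal.ofReal (D₁ * orliczNorm μ N fun x => f x - m) ≤
          gradLqNorm μ (ENNReal.ofReal q) f) →
      ∀ f : Ω → ℝ, LipschitzOnBalls f → ∀ m : ℝ, IsMedian μ f m →
        ENNReal.ofReal (D₁ / 4 * orliczNorm μ (modifiedYoung N q) fun x => f x - m) ≤
          gradLqNorm μ (ENNReal.ofReal q) f) ∧
    (∀ D₂ : ℝ, 0 < D₂ →
      (∀ f : Ω → ℝ, LipschitzOnBalls f → ∀ m : ℝ, IsMedian μ f m →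
        ENNReal.ofReal (D₂ * orliczNorm μ (modifiedYoung N q) fun x => f x - m) ≤
          gradLqNorm μ (ENNReal.ofReal q) f) →
      ∀ f : Ω → ℝ, LipschitzOnBalls f → ∀ m : ℝ, IsMedian μ f m →
        ENNReal.ofReal (D₂ / 4 * orliczNorm μ N fun x => f x - m) ≤
          gradLqNorm μ (ENNReal.ofReal q) f) := by
  constructor
  · intro D hD hsob f hf m hm
    refine le_trans (ENNReal.ofReal_le_ofReal ?_) (hsob f hf m hm)
    calc D / 4 * orliczNorm μ (modifiedYoung N q) (fun x => f x - m)
        ≤ D / 4 * (4 * orliczNorm μ N fun x => f x - m) := by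
          gcongr; exact hN.orliczNorm_modifiedYoung_le hNq hq μ _
      _ = D * orliczNorm μ N fun x => f x - m := by ring
  · intro D hD hsob f hf m hm
    refine le_trans (ENNReal.ofReal_le_ofReal ?_) (hsob f hf m hm)
    calc D / 4 * orliczNorm μ N (fun x => f x - m)
        ≤ D * orliczNorm μ N fun x => f x - m := by
          gcongr; exacts [orliczNorm_nonneg, by linarith]
      _ ≤ D * orliczNorm μ (modifiedYoung N q) fun x => f x - m := by
          gcongr; exact hN.orliczNorm_le_orliczNorm_modifiedYoung hNq hq μ _

/-- The behavior of `N` near 0 is irrelevant: the Orlicz–Sobolev inequalities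
for `N` and for `N₀` are equivalent: (1) with `D₁` gives (2) with `D₁/4`, and (2) with `D₂`
gives (1) with `D₂/4` (so `D₁/4 ≤ D₂ ≤ 4·D₁`). -/
theorem orlicz_sobolev_modification_at_zero {Ω : Type*} [MetricSpace Ω]
    [TopologicalSpace.SeparableSpace Ω] [MeasurableSpace Ω] [BorelSpace Ω]
    (μ : Measure Ω) [IsProbabilityMeasure μ] (hnd : ∀ x : Ω, μ {x} ≠ 1)
    (N : ℝ → ℝ) (hN : MemN N) (q : ℝ) (hq : 1 ≤ q)
    (hNq : MonotoneOn (fun t => N t ^ (1 / q) / t) (Ioi (0 : ℝ))) :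
    (∀ D₁ : ℝ, 0 < D₁ →
      (∀ f : Ω → ℝ, LipschitzOnBalls f → ∀ m : ℝ, IsMedian μ f m →
        ENNReal.ofReal (D₁ * orliczNorm μ N fun x => f x - m) ≤
          gradLqNorm μ (ENNReal.ofReal q) f) →
      ∀ f : Ω → ℝ, LipschitzOnBalls f → ∀ m : ℝ, IsMedian μ f m →
        ENNReal.ofReal (D₁ / 4 * orliczNorm μ (modifiedYoung N q) fun x => f x - m) ≤
          gradLqNorm μ (ENNReal.ofReal q) f) ∧
    (∀ D₂ : ℝ, 0 < D₂ →
      (∀ f : Ω → ℝ, LipschitzOnBalls f → ∀ m : ℝ, IsMedian μ f m →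
        ENNReal.ofReal (D₂ * orliczNorm μ (modifiedYoung N q) fun x => f x - m) ≤
          gradLqNorm μ (ENNReal.ofReal q) f) →
      ∀ f : Ω → ℝ, LipschitzOnBalls f → ∀ m : ℝ, IsMedian μ f m →
        ENNReal.ofReal (D₂ / 4 * orliczNorm μ N fun x => f x - m) ≤
          gradLqNorm μ (ENNReal.ofReal q) f) :=
  orlicz_sobolev_modification_at_zero_general μ N hN q hq hNq

end
end
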